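/- Let W be a ℂ-vector space and let E(W) = Hom(W, W((x))). Suppose a(x), b(x) ∈ E(W) and there exist b⁽ⁱ⁾(x), a⁽ⁱ⁾(x) ∈ E(W) and f_i(x) ∈ ℂ((x)) (1 ≤ i ≤ r) and k ∈ ℕ such that (x₁−x₂)ᵏ a(x₁)b(x₂) = (x₁−x₂)ᵏ Σᵢ f_i(x₂−x₁) b⁽ⁱ⁾(x₂)a⁽ⁱ⁾(x₁), where f_i(x₂−x₁) is expanded in nonnegative powers of x₁. Then the pair (a(x),b(x)) is compatible: (x₁−x₂)ᵏ a(x₁)b(x₂) ∈ Hom(W, W((x₁,x₂))). -/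

import Mathlib

/-! Below the truncation order of `b(x)` on `w` every term on the left of the locality relation
vanishes; below the common truncation order of the `a⁽ⁱ⁾(x)` on `w` every term on the right does,
since the expansion of `f_i(x₂−x₁)` only lowers the exponent of `x₁`. -/

/-- Generalized binomial coefficient `C(n,m) = n(n−1)⋯(n−m+1)/m!` for `n : ℤ`. -/
noncomputable def genChoose (n : ℤ) (m : ℕ) : ℂ :=
  (∏ j ∈ Finset.range m, ((n : ℂ) - j)) / (m.factorial : ℂ)

theorem exists_forall_lt_eq_zero_of_finite {ι M : Type*} [Finite ι] [Zero M] (c : ι → ℤ → M)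
    (hc : ∀ i, ∃ N : ℤ, ∀ m : ℤ, m < N → c i m = 0) :
    ∃ N : ℤ, ∀ i, ∀ m : ℤ, m < N → c i m = 0 := by
  choose N hN using hc
  obtain ⟨N₀, hN₀⟩ := Finite.exists_ge N
  exact ⟨N₀, fun i m hm => hN i m (hm.trans_le (hN₀ i))⟩

theorem stmt17_general {W : Type*} [AddCommGroup W] [Module ℂ W]
    (r : ℕ) (k : ℕ)
    (a b : ℤ → W →ₗ[ℂ] W) (aa bb : Fin r → ℤ → W →ₗ[ℂ] W)
    (f : Fin r → LaurentSeries ℂ)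
    (hb : ∀ w : W, ∃ N : ℤ, ∀ m : ℤ, m < N → b m w = 0)
    (haa : ∀ i, ∀ w : W, ∃ N : ℤ, ∀ m : ℤ, m < N → aa i m w = 0)
    (hloc : ∀ m n : ℤ, ∀ w : W,
      (∑ j ∈ Finset.range (k + 1),
          ((-1 : ℂ) ^ j * ((k.choose j : ℕ) : ℂ)) •
            a (m - ((k - j : ℕ) : ℤ)) (b (n - j) w))
        = ∑ j ∈ Finset.range (k + 1),
            ((-1 : ℂ) ^ j * ((k.choose j : ℕ) : ℂ)) •
              (∑ i : Fin r, ∑ᶠ t : ℤ, ∑ᶠ s : ℕ,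
                ((-1 : ℂ) ^ s * genChoose (t + s) s * (f i).coeff (t + s)) •
                  bb i (n - j - t) (aa i (m - ((k - j : ℕ) : ℤ) - s) w))) :
    ∀ w : W, ∃ N : ℤ, ∀ m n : ℤ, (m < N ∨ n < N) →
      (∑ j ∈ Finset.range (k + 1),
          ((-1 : ℂ) ^ j * ((k.choose j : ℕ) : ℂ)) •
            a (m - ((k - j : ℕ) : ℤ)) (b (n - j) w)) = 0 := by
  intro w
  obtain ⟨Nb, hNb⟩ := hb w
  obtain ⟨Na, hNa⟩ := exists_forall_lt_eq_zero_of_finite (fun i m => aa i m w) (haa · w)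
  refine ⟨min Na Nb, fun m n hmn => ?_⟩
  rcases hmn with hm | hn
  · rw [hloc]
    refine Finset.sum_eq_zero fun j _ => ?_
    have haa_zero : ∀ (i : Fin r) (s : ℕ), aa i (m - ((k - j : ℕ) : ℤ) - s) w = 0 :=
      fun i s => hNa i _ (by omega)
    simp only [haa_zero, map_zero, smul_zero, finsum_zero, Finset.sum_const_zero]
  · refine Finset.sum_eq_zero fun j _ => ?_
    rw [hNb (n - j) (by omega), map_zero, smul_zero]

/-- Let `W` be a ℂ-vector space and `a(x), b(x), a⁽ⁱ⁾(x), b⁽ⁱ⁾(x)`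
elements of `E(W) = Hom(W,W((x)))`, recorded by coefficient maps `ℤ → End(W)`
(writing `a(x) = Σ_m a_m x^m`, lower-truncated on each vector).  Suppose the
`S`-locality relation
`(x₁−x₂)^k a(x₁)b(x₂) = (x₁−x₂)^k Σᵢ f_i(x₂−x₁) b⁽ⁱ⁾(x₂)a⁽ⁱ⁾(x₁)` holds, with
`f_i ∈ ℂ((x))` and `f_i(x₂−x₁)` expanded in nonnegative powers of `x₁`
(the coefficient of `x₁^s x₂^t` of `f_i(x₂−x₁)` being `(−1)^s C(t+s,s)·(f_i)_{t+s}`).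
Then the pair `(a(x),b(x))` is compatible:
`(x₁−x₂)^k a(x₁)b(x₂) ∈ Hom(W,W((x₁,x₂)))`, i.e. for each `w` its coefficients
vanish whenever the exponent of `x₁` or of `x₂` is sufficiently negative. -/
theorem stmt17 {W : Type*} [AddCommGroup W] [Module ℂ W]
    (r : ℕ) (k : ℕ)
    (a b : ℤ → W →ₗ[ℂ] W) (aa bb : Fin r → ℤ → W →ₗ[ℂ] W)
    (f : Fin r → LaurentSeries ℂ)
    (ha : ∀ w : W, ∃ N : ℤ, ∀ m : ℤ, m < N → a m w = 0)
    (hb : ∀ w : W, ∃ N : ℤ, ∀ m : ℤ, m < N → b m w = 0)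
    (haa : ∀ i, ∀ w : W, ∃ N : ℤ, ∀ m : ℤ, m < N → aa i m w = 0)
    (hbb : ∀ i, ∀ w : W, ∃ N : ℤ, ∀ m : ℤ, m < N → bb i m w = 0)
    (hloc : ∀ m n : ℤ, ∀ w : W,
      (∑ j ∈ Finset.range (k + 1),
          ((-1 : ℂ) ^ j * ((k.choose j : ℕ) : ℂ)) •
            a (m - ((k - j : ℕ) : ℤ)) (b (n - j) w))
        = ∑ j ∈ Finset.range (k + 1),
            ((-1 : ℂ) ^ j * ((k.choose j : ℕ) : ℂ)) •
              (∑ i : Fin r, ∑ᶠ t : ℤ, ∑ᶠ s : ℕ,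
                ((-1 : ℂ) ^ s * genChoose (t + s) s * (f i).coeff (t + s)) •
                  bb i (n - j - t) (aa i (m - ((k - j : ℕ) : ℤ) - s) w))) :
    ∀ w : W, ∃ N : ℤ, ∀ m n : ℤ, (m < N ∨ n < N) →
      (∑ j ∈ Finset.range (k + 1),
          ((-1 : ℂ) ^ j * ((k.choose j : ℕ) : ℂ)) •
            a (m - ((k - j : ℕ) : ℤ)) (b (n - j) w)) = 0 :=
  stmt17_general r k a b aa bb f hb haa hloc
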